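/- arXiv:2212.01102 — 4 statements merged into one kernel-verified Lean document; each statement's English description precedes it below -/
import Mathlib

section
/- Let S be the frame operator of a frame for H, and {P_N} an increasing sequence of orthogonal projections converging strongly to the identity. For f ∈ H let v_N = (P_N S P_N)⁻¹ P_N f (inverse taken on P_N(H)). Then lim_{N→∞} ‖v_N − S⁻¹ f‖ = 0. -/
open scoped RealInnerProductSpace
open Filter Topology

/-
Céa's lemma: since `S` is coercive with constant `A` and `S (v - v_N)` is orthogonal to
`range P_N` (Galerkin orthogonality), `v_N` is a quasi-best approximation of `v = S⁻¹ f`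
from `range P_N`, i.e. `‖v_N - v‖ ≤ (‖S‖ / A) ‖v - u‖` for every `u ∈ range P_N`. Since the
ranges increase and their union is dense, the right-hand side can be made arbitrarily small.
-/

theorem norm_sub_le_of_galerkin_orthogonal {E : Type*} [NormedAddCommGroup E]
    [InnerProductSpace ℝ E] {S : E →L[ℝ] E} {A : ℝ} (hA : 0 < A)
    (hcoer : ∀ u : E, A * ‖u‖ ^ 2 ≤ ⟪S u, u⟫) {K : Submodule ℝ E} {v w u : E}
    (hw : w ∈ K) (hu : u ∈ K) (horth : ∀ x ∈ K, ⟪S (v - w), x⟫ = 0) :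
    ‖v - w‖ ≤ ‖S‖ / A * ‖v - u‖ := by
  set e := v - w
  have hsplit : ⟪S e, e⟫ = ⟪S e, v - u⟫ := by
    have : e = (v - u) + (u - w) := (sub_add_sub_cancel v u w).symm
    rw [this, inner_add_right, ← this, horth _ (sub_mem hu hw), add_zero]
  have hsq : A * ‖e‖ ^ 2 ≤ ‖S‖ * ‖e‖ * ‖v - u‖ :=
    calc A * ‖e‖ ^ 2 ≤ ⟪S e, e⟫ := hcoer e
      _ = ⟪S e, v - u⟫ := hsplit
      _ ≤ ‖S e‖ * ‖v - u‖ := real_inner_le_norm _ _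
      _ ≤ ‖S‖ * ‖e‖ * ‖v - u‖ := by gcongr; exact S.le_opNorm e
  rw [div_mul_eq_mul_div, le_div_iff₀ hA]
  rcases (norm_nonneg e).eq_or_lt with he | he
  · rw [← he, zero_mul]
    positivity
  · nlinarith

theorem tendsto_of_dist_le_mul_dist_of_mem_closure_iUnion {X : Type*} [PseudoMetricSpace X]
    {K : ℕ → Set X} (hK : Monotone K) {v : X} (hv : v ∈ closure (⋃ N, K N))
    {x : ℕ → X} {C : ℝ} (hx : ∀ N, ∀ u ∈ K N, dist (x N) v ≤ C * dist v u) :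
    Tendsto x atTop (𝓝 v) := by
  rw [Metric.tendsto_atTop]
  intro ε hε
  have hnhds : {u | C * dist v u < ε} ∈ 𝓝 v :=
    (continuous_const.mul (continuous_const.dist continuous_id)).continuousAt.preimage_mem_nhds
      (Iio_mem_nhds (by simpa using hε))
  obtain ⟨u, hu, hu'⟩ := mem_closure_iff_nhds.mp hv _ hnhds
  obtain ⟨N₀, huN₀⟩ := Set.mem_iUnion.mp hu'
  exact ⟨N₀, fun N hN => (hx N u (hK hN huN₀)).trans_lt hu⟩

theorem stmt_9_general {H : Type*} [NormedAddCommGroup H] [InnerProductSpace ℝ H]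
    (S : H →L[ℝ] H) (A : ℝ) (hA : 0 < A)
    (hlow : ∀ u : H, A * ‖u‖ ^ 2 ≤ ⟪S u, u⟫)
    (P : ℕ → H →L[ℝ] H)
    (hmono : ∀ N, LinearMap.range (P N : H →ₗ[ℝ] H) ≤ LinearMap.range (P (N + 1) : H →ₗ[ℝ] H))
    (hdense : Dense (⋃ N, (LinearMap.range (P N : H →ₗ[ℝ] H) : Set H)))
    (f v : H) (hv : ∀ u : H, ⟪S v, u⟫ = ⟪f, u⟫)
    (vN : ℕ → H) (hmem : ∀ N, vN N ∈ LinearMap.range (P N : H →ₗ[ℝ] H))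
    (heq : ∀ N, ∀ u ∈ LinearMap.range (P N : H →ₗ[ℝ] H), ⟪S (vN N), u⟫ = ⟪f, u⟫) :
    Filter.Tendsto (fun N => ‖vN N - v‖) Filter.atTop (nhds 0) := by
  have hK : Monotone fun N => (LinearMap.range (P N : H →ₗ[ℝ] H) : Set H) :=
    monotone_nat_of_le_succ hmono
  have horth : ∀ N, ∀ u ∈ LinearMap.range (P N : H →ₗ[ℝ] H), ⟪S (v - vN N), u⟫ = 0 :=
    fun N u hu => by rw [map_sub, inner_sub_left, hv, heq N u hu, sub_self]
  have hcea : ∀ N, ∀ u ∈ LinearMap.range (P N : H →ₗ[ℝ] H),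
      dist (vN N) v ≤ ‖S‖ / A * dist v u := fun N u hu => by
    rw [dist_comm, dist_eq_norm, dist_eq_norm]
    exact norm_sub_le_of_galerkin_orthogonal hA hlow (hmem N) hu (horth N)
  exact tendsto_iff_norm_sub_tendsto_zero.mp
    (tendsto_of_dist_le_mul_dist_of_mem_closure_iUnion hK (hdense v) hcea)

/-- Let `S` be the frame operator of a frame (bounds `0 < A ≤ B`), `{P N}` an increasing
sequence of orthogonal projections with dense union of ranges, `v = S⁻¹ f`, and let
`v_N = (P_N S P_N)⁻¹ P_N f`, i.e. `v_N ∈ range (P N)` with `⟨S v_N, u⟩ = ⟨f, u⟩` for all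
`u ∈ range (P N)`. Then `‖v_N − S⁻¹ f‖ → 0`. -/
theorem stmt_9 {H : Type*} [NormedAddCommGroup H] [InnerProductSpace ℝ H] [CompleteSpace H]
    (S : H →L[ℝ] H) (A B : ℝ) (hA : 0 < A) (hAB : A ≤ B)
    (hsa : ∀ u v : H, ⟪S u, v⟫ = ⟪u, S v⟫)
    (hlow : ∀ u : H, A * ‖u‖ ^ 2 ≤ ⟪S u, u⟫)
    (hup : ∀ u : H, ⟪S u, u⟫ ≤ B * ‖u‖ ^ 2)
    (P : ℕ → H →L[ℝ] H)
    (hPsa : ∀ N, ∀ u v : H, ⟪P N u, v⟫ = ⟪u, P N v⟫)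
    (hPidem : ∀ N, P N ∘L P N = P N)
    (hmono : ∀ N, LinearMap.range (P N : H →ₗ[ℝ] H) ≤ LinearMap.range (P (N + 1) : H →ₗ[ℝ] H))
    (hdense : Dense (⋃ N, (LinearMap.range (P N : H →ₗ[ℝ] H) : Set H)))
    (f v : H) (hv : ∀ u : H, ⟪S v, u⟫ = ⟪f, u⟫)
    (vN : ℕ → H) (hmem : ∀ N, vN N ∈ LinearMap.range (P N : H →ₗ[ℝ] H))
    (heq : ∀ N, ∀ u ∈ LinearMap.range (P N : H →ₗ[ℝ] H), ⟪S (vN N), u⟫ = ⟪f, u⟫) :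
    Filter.Tendsto (fun N => ‖vN N - v‖) Filter.atTop (nhds 0) :=
  stmt_9_general S A hA hlow P hmono hdense f v hv vN hmem heq
end

section
/- (Vigier) Let {A_n} be a sequence of bounded self-adjoint operators on a Hilbert space H such that for every unit vector u the sequence ⟨A_n u, u⟩ is increasing and bounded above uniformly (there is M with ⟨A_n u, u⟩ ≤ M for all n and ‖u‖=1). Then {A_n} converges strongly to some bounded self-adjoint operator A. -/
open scoped RealInnerProductSpace
open Filter Topology

/-! For `n ≤ m` the operator `A m - A n` is positive, and for a positive operator `P` the
Cauchy–Schwarz inequality for the form `⟪P x, y⟫` gives `‖P u‖² ≤ ‖P‖ ⟪P u, u⟫`. The `A n` are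
uniformly bounded, since the norm of a symmetric operator is the supremum of `|⟪A u, u⟫|` over the
unit sphere and `⟪A 0 u, u⟫ ≤ ⟪A n u, u⟫ ≤ M ‖u‖²`. Hence
`‖A m u - A n u‖² ≤ 2C (⟪A m u, u⟫ - ⟪A n u, u⟫)`, whose right side tends to `0` because the
increasing bounded sequence `⟪A n u, u⟫` converges; so `A n u` is Cauchy. The pointwise limit is
continuous by Banach–Steinhaus and symmetric as a limit of symmetric operators. -/

theorem cauchySeq_of_dist_sq_le_mul_sub {X : Type*} [PseudoMetricSpace X] {f : ℕ → X}
    {g : ℕ → ℝ} (hg : CauchySeq g) {K : ℝ}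
    (h : ∀ n m, n ≤ m → dist (f n) (f m) ^ 2 ≤ K * (g m - g n)) : CauchySeq f := by
  rw [Metric.cauchySeq_iff'] at hg ⊢
  intro ε hε
  obtain ⟨N, hN⟩ := hg (ε ^ 2 / (|K| + 1)) (by positivity)
  refine ⟨N, fun n hn => ?_⟩
  have hgn : |g n - g N| < ε ^ 2 / (|K| + 1) := by simpa [Real.dist_eq] using hN n hn
  have : dist (f n) (f N) ^ 2 < ε ^ 2 := calc
    dist (f n) (f N) ^ 2 ≤ K * (g n - g N) := by rw [dist_comm]; exact h N n hn
    _ ≤ |K| * |g n - g N| := by rw [← abs_mul]; exact le_abs_self _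
    _ ≤ (|K| + 1) * |g n - g N| := by gcongr; linarith
    _ < (|K| + 1) * (ε ^ 2 / (|K| + 1)) := by gcongr
    _ = ε ^ 2 := by field_simp
  exact lt_of_pow_lt_pow_left₀ 2 hε.le this

namespace ContinuousLinearMap

variable {H : Type*} [NormedAddCommGroup H] [InnerProductSpace ℝ H]

theorem abs_inner_apply_self_le (T : H →L[ℝ] H) (u : H) : |⟪T u, u⟫| ≤ ‖T‖ * ‖u‖ ^ 2 :=
  (abs_real_inner_le_norm _ _).trans <| by
    rw [sq, ← mul_assoc]; exact mul_le_mul_of_nonneg_right (T.le_opNorm u) (norm_nonneg u)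

theorem inner_apply_self_le_of_forall_norm_eq_one {T : H →L[ℝ] H} {M : ℝ}
    (h : ∀ u : H, ‖u‖ = 1 → ⟪T u, u⟫ ≤ M) (u : H) : ⟪T u, u⟫ ≤ M * ‖u‖ ^ 2 := by
  rcases eq_or_ne u 0 with rfl | hu
  · simp
  have h1 := h (‖u‖⁻¹ • u) (norm_smul_inv_norm hu)
  rw [map_smul, real_inner_smul_left, real_inner_smul_right, ← mul_assoc, ← sq, inv_pow,
    inv_mul_le_iff₀ (by positivity)] at h1
  linarith

theorem norm_le_of_abs_inner_apply_self_le {T : H →L[ℝ] H} (hT : T.IsSymmetric) {c : ℝ}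
    (hc : 0 ≤ c) (h : ∀ u, |⟪T u, u⟫| ≤ c * ‖u‖ ^ 2) : ‖T‖ ≤ c := by
  rw [T.norm_eq_iSup_rayleighQuotient hT]
  refine ciSup_le fun u => ?_
  rcases eq_or_ne u 0 with rfl | hu
  · simpa using hc
  rw [rayleighQuotient, reApplyInnerSelf_apply, abs_div, abs_sq, div_le_iff₀ (by positivity)]
  simpa using h u

theorem le_iff_forall_inner_apply_self_le {S T : H →L[ℝ] H} (hS : S.IsSymmetric)
    (hT : T.IsSymmetric) : S ≤ T ↔ ∀ u, ⟪S u, u⟫ ≤ ⟪T u, u⟫ := by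
  rw [le_def, isPositive_iff]
  simp only [sub_apply, inner_sub_left, sub_nonneg, and_iff_right_iff_imp]
  exact fun _ => (hT.sub hS : _)

theorem IsPositive.norm_apply_sq_le {T : H →L[ℝ] H} (hT : T.IsPositive) (u : H) :
    ‖T u‖ ^ 2 ≤ ‖T‖ * ⟪T u, u⟫ := by
  let B : LinearMap.BilinForm ℝ H := (innerₗ H).comp (T : H →ₗ[ℝ] H)
  -- Cauchy–Schwarz for the positive form `⟪T x, y⟫`, at `x = u`, `y = T u`.
  have cs := B.apply_mul_apply_le_of_forall_zero_le hT.inner_nonneg_left u (T u)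
  change ⟪T u, T u⟫ * ⟪T (T u), u⟫ ≤ ⟪T u, u⟫ * ⟪T (T u), T u⟫ at cs
  rw [hT.inner_left_eq_inner_right (T u) u, real_inner_self_eq_norm_sq] at cs
  rcases eq_or_ne (T u) 0 with h0 | h0
  · simp [h0]
  have hTT : ⟪T (T u), T u⟫ ≤ ‖T‖ * ‖T u‖ ^ 2 :=
    (le_abs_self _).trans (T.abs_inner_apply_self_le _)
  have hpos : 0 < ‖T u‖ ^ 2 := by positivity
  refine le_of_mul_le_mul_right ?_ hpos
  calc ‖T u‖ ^ 2 * ‖T u‖ ^ 2 ≤ ⟪T u, u⟫ * ⟪T (T u), T u⟫ := cs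
    _ ≤ ⟪T u, u⟫ * (‖T‖ * ‖T u‖ ^ 2) := by gcongr; exact hT.inner_nonneg_left u
    _ = ‖T‖ * ⟪T u, u⟫ * ‖T u‖ ^ 2 := by ring

theorem norm_le_max_of_monotone {A : ℕ → H →L[ℝ] H} (hA : Monotone A)
    (hsym : ∀ n, (A n).IsSymmetric) {M : ℝ} (hM : ∀ n u, ⟪A n u, u⟫ ≤ M * ‖u‖ ^ 2) (n : ℕ) :
    ‖A n‖ ≤ max M ‖A 0‖ := by
  refine norm_le_of_abs_inner_apply_self_le (hsym n) (le_max_of_le_right (norm_nonneg _))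
    fun u => abs_le.2 ⟨?_, (hM n u).trans (by gcongr; exact le_max_left _ _)⟩
  calc -(max M ‖A 0‖ * ‖u‖ ^ 2) ≤ -(‖A 0‖ * ‖u‖ ^ 2) := by gcongr; exact le_max_right _ _
    _ ≤ ⟪A 0 u, u⟫ := neg_le_of_abs_le ((A 0).abs_inner_apply_self_le u)
    _ ≤ ⟪A n u, u⟫ := (le_iff_forall_inner_apply_self_le (hsym 0) (hsym n)).1 (hA n.zero_le) u

theorem cauchySeq_apply_of_monotone {A : ℕ → H →L[ℝ] H} (hA : Monotone A) {C : ℝ}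
    (hC : ∀ n, ‖A n‖ ≤ C) (u : H) : CauchySeq fun n => A n u := by
  have hq : Monotone fun n => ⟪A n u, u⟫ := fun n m hnm =>
    sub_nonneg.1 (by simpa only [sub_apply, inner_sub_left] using (hA hnm).inner_nonneg_left u)
  have hq_bdd : BddAbove (Set.range fun n => ⟪A n u, u⟫) :=
    ⟨C * ‖u‖ ^ 2, Set.forall_mem_range.2 fun n => (le_abs_self _).trans <|
      ((A n).abs_inner_apply_self_le u).trans (by gcongr; exact hC n)⟩
  refine cauchySeq_of_dist_sq_le_mul_sub (tendsto_atTop_ciSup hq hq_bdd).cauchySeq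
    (K := 2 * C) fun n m hnm => ?_
  have hpos : (A m - A n).IsPositive := hA hnm
  calc dist (A n u) (A m u) ^ 2 = ‖(A m - A n) u‖ ^ 2 := by
        rw [dist_comm, dist_eq_norm, sub_apply]
    _ ≤ ‖A m - A n‖ * ⟪(A m - A n) u, u⟫ := hpos.norm_apply_sq_le u
    _ ≤ 2 * C * (⟪A m u, u⟫ - ⟪A n u, u⟫) := by
      rw [sub_apply, inner_sub_left]
      gcongr
      · exact sub_nonneg.2 (hq hnm)
      · exact (norm_sub_le _ _).trans (by linarith [hC m, hC n])

theorem isSymmetric_of_tendsto {ι : Type*} {l : Filter ι} [l.NeBot] {A : ι → H →L[ℝ] H}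
    (hA : ∀ i, (A i).IsSymmetric) {T : H →L[ℝ] H}
    (hT : ∀ u, Tendsto (fun i => A i u) l (𝓝 (T u))) : T.IsSymmetric := fun u v =>
  tendsto_nhds_unique ((hT u).inner (𝕜 := ℝ) tendsto_const_nhds) <| by
    simp_rw [show ∀ i, ⟪A i u, v⟫ = ⟪u, A i v⟫ from fun i => hA i u v]
    exact tendsto_const_nhds.inner (hT v)

end ContinuousLinearMap

open ContinuousLinearMap

/-- Vigier's theorem: a sequence of bounded self-adjoint operators whose quadratic
forms are increasing and uniformly bounded above converges strongly to a bounded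
self-adjoint operator. -/
theorem stmt_10 {H : Type*} [NormedAddCommGroup H] [InnerProductSpace ℝ H] [CompleteSpace H]
    (A : ℕ → H →L[ℝ] H)
    (hsa : ∀ n, ∀ u v : H, ⟪A n u, v⟫ = ⟪u, A n v⟫)
    (hincr : ∀ n, ∀ u : H, ⟪A n u, u⟫ ≤ ⟪A (n + 1) u, u⟫)
    (hbdd : ∃ M : ℝ, ∀ n, ∀ u : H, ‖u‖ = 1 → ⟪A n u, u⟫ ≤ M) :
    ∃ T : H →L[ℝ] H, (∀ u v : H, ⟪T u, v⟫ = ⟪u, T v⟫) ∧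
      ∀ u : H, Filter.Tendsto (fun n => A n u) Filter.atTop (nhds (T u)) := by
  obtain ⟨M, hM⟩ := hbdd
  have hmono : Monotone A := monotone_nat_of_le_succ fun n =>
    (le_iff_forall_inner_apply_self_le (hsa n) (hsa (n + 1))).2 (hincr n)
  have hbound := norm_le_max_of_monotone hmono hsa
    fun n => inner_apply_self_le_of_forall_norm_eq_one (hM n)
  choose f hf using fun u =>
    cauchySeq_tendsto_of_complete (cauchySeq_apply_of_monotone hmono hbound u)
  let T := continuousLinearMapOfTendsto A (tendsto_pi_nhds.2 hf)
  exact ⟨T, isSymmetric_of_tendsto hsa hf, hf⟩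
end

section
/- A frame F = {x_j} for H is scalable with scaling c ∈ ℓ^∞(J) (i.e., {c_j x_j} is Parseval) if and only if for every u, f ∈ H: −(1/2)‖f‖² ≤ (1/2)‖D_c T* u‖² − ⟨f, u⟩ ≤ (1/2)‖u‖² − ⟨f, u⟩. -/
open scoped RealInnerProductSpace

lemma lp2_norm_sq_eq {J : Type*} (y : lp (fun _ : J => ℝ) 2) :
    ‖y‖ ^ 2 = ∑' j, (y j) ^ 2 := by
  rw [← real_inner_self_eq_norm_sq, lp.inner_eq_tsum]
  exact tsum_congr fun j => (sq (y j)).symm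

/-- A frame `F = {x j}` is scalable with scaling `c ∈ ℓ^∞(J)` (i.e. `{c j • x j}` is
Parseval) iff for every `u, f ∈ H`:
`−(1/2)‖f‖² ≤ (1/2)‖D_c T* u‖² − ⟨f, u⟩ ≤ (1/2)‖u‖² − ⟨f, u⟩`. -/
theorem stmt_13 {H : Type*} [NormedAddCommGroup H] [InnerProductSpace ℝ H] [CompleteSpace H]
    {J : Type*} (x : J → H) (A B : ℝ) (hA : 0 < A) (hAB : A ≤ B)
    (hlow : ∀ u : H, A * ‖u‖ ^ 2 ≤ ∑' j, ⟪u, x j⟫ ^ 2)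
    (hhigh : ∀ u : H, ∑' j, ⟪u, x j⟫ ^ 2 ≤ B * ‖u‖ ^ 2)
    (c : J → ℝ) (hc : ∃ C, ∀ j, |c j| ≤ C)
    (Tstar : H →L[ℝ] lp (fun _ : J => ℝ) 2)
    (hT : ∀ (u : H) (j : J), Tstar u j = ⟪u, x j⟫)
    (Dc : lp (fun _ : J => ℝ) 2 →L[ℝ] lp (fun _ : J => ℝ) 2)
    (hDc : ∀ (y : lp (fun _ : J => ℝ) 2) (j : J), Dc y j = c j * y j)
    (hframe : ∃ A' B' : ℝ, 0 < A' ∧ A' ≤ B' ∧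
      (∀ u : H, A' * ‖u‖ ^ 2 ≤ ∑' j, ⟪u, c j • x j⟫ ^ 2) ∧
      (∀ u : H, ∑' j, ⟪u, c j • x j⟫ ^ 2 ≤ B' * ‖u‖ ^ 2)) :
    (∀ u : H, ∑' j, ⟪u, c j • x j⟫ ^ 2 = ‖u‖ ^ 2) ↔
      ∀ u f : H,
        -((1/2) * ‖f‖ ^ 2) ≤ (1/2) * ‖Dc (Tstar u)‖ ^ 2 - ⟪f, u⟫ ∧
        (1/2) * ‖Dc (Tstar u)‖ ^ 2 - ⟪f, u⟫ ≤ (1/2) * ‖u‖ ^ 2 - ⟪f, u⟫ := by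
  have key : ∀ u : H, ‖Dc (Tstar u)‖ ^ 2 = ∑' j, ⟪u, c j • x j⟫ ^ 2 := by
    intro u
    rw [lp2_norm_sq_eq]
    refine tsum_congr fun j => ?_
    rw [hDc, hT, real_inner_smul_right]
  constructor
  · intro hP u f
    have h1 : ‖Dc (Tstar u)‖ ^ 2 = ‖u‖ ^ 2 := by rw [key, hP]
    rw [h1]
    constructor
    · have hfu : ⟪f, u⟫ ≤ (1/2) * ‖f‖ ^ 2 + (1/2) * ‖u‖ ^ 2 := by
        have := real_inner_le_norm f u
        nlinarith [sq_nonneg (‖f‖ - ‖u‖)]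
      linarith
    · linarith
  · intro h u
    have h1 := (h u u).1
    have h2 := (h u u).2
    rw [key] at h1 h2
    rw [real_inner_self_eq_norm_sq] at h1 h2
    linarith
end

section
/- A frame F is scalable with scaling c if and only if for every f ∈ H, min_{u ∈ H} [(1/2)‖D_c T* u‖² − ⟨f, u⟩] = −(1/2)‖f‖². -/
/-!
Completing the square, `½‖u‖² - ⟪f, u⟫ = ½‖u - f‖² - ½‖f‖²`, shows that when `‖D_c T* u‖² = ‖u‖²`
the functional is minimised at `u = f` with value `-½‖f‖²`. Conversely, testing the minimality
at `f = u` gives `‖D_c T* u‖² ≥ ‖u‖²`; then a minimiser `u₀` for `f` satisfies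
`½‖u₀ - f‖² ≤ 0`, so `u₀ = f`, and its value forces `‖D_c T* f‖² = ‖f‖²`.
-/

open scoped RealInnerProductSpace

section Variational

variable {H : Type*} [NormedAddCommGroup H] [InnerProductSpace ℝ H]

theorem half_norm_sq_sub_inner_eq (f u : H) :
    1 / 2 * ‖u‖ ^ 2 - ⟪f, u⟫ = 1 / 2 * ‖u - f‖ ^ 2 - 1 / 2 * ‖f‖ ^ 2 := by
  rw [norm_sub_sq_real, real_inner_comm]
  ring

theorem isLeast_half_norm_sq_sub_inner (f : H) :
    IsLeast (Set.range fun u : H => 1 / 2 * ‖u‖ ^ 2 - ⟪f, u⟫) (-(1 / 2 * ‖f‖ ^ 2)) := by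
  refine ⟨⟨f, by simp only [half_norm_sq_sub_inner_eq, sub_self, norm_zero]; ring⟩, ?_⟩
  rintro _ ⟨u, rfl⟩
  simp only [half_norm_sq_sub_inner_eq]
  nlinarith [sq_nonneg ‖u - f‖]

theorem forall_eq_norm_sq_iff_isLeast (q : H → ℝ) :
    (∀ u, q u = ‖u‖ ^ 2) ↔
      ∀ f : H, IsLeast (Set.range fun u : H => 1 / 2 * q u - ⟪f, u⟫) (-(1 / 2 * ‖f‖ ^ 2)) := by
  constructor
  · intro hq f
    simpa only [hq] using isLeast_half_norm_sq_sub_inner f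
  · intro h f
    have norm_sq_le (u : H) : ‖u‖ ^ 2 ≤ q u := by
      have := (h u).2 ⟨u, rfl⟩
      simp only [real_inner_self_eq_norm_sq] at this
      linarith
    obtain ⟨⟨u₀, hu₀⟩, -⟩ := h f
    simp only at hu₀
    have hsq : ‖u₀ - f‖ ^ 2 ≤ 0 := by
      linarith [norm_sq_le u₀, half_norm_sq_sub_inner_eq f u₀]
    have hu₀f : u₀ = f := by
      rw [← sub_eq_zero, ← norm_eq_zero]
      exact pow_eq_zero_iff two_ne_zero |>.mp (le_antisymm hsq (sq_nonneg _))
    subst hu₀f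
    rw [real_inner_self_eq_norm_sq] at hu₀
    linarith [norm_sq_le u₀]

end Variational

theorem lp.norm_sq_eq_tsum_sq {J : Type*} (y : lp (fun _ : J => ℝ) 2) :
    ‖y‖ ^ 2 = ∑' j, y j ^ 2 := by
  rw [← real_inner_self_eq_norm_sq, lp.inner_eq_tsum]
  simp only [real_inner_self_eq_norm_sq, Real.norm_eq_abs, sq_abs]

theorem stmt_14_general {H : Type*} [NormedAddCommGroup H] [InnerProductSpace ℝ H]
    {J : Type*} (x : J → H)
    (c : J → ℝ)
    (Tstar : H →L[ℝ] lp (fun _ : J => ℝ) 2)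
    (hT : ∀ (u : H) (j : J), Tstar u j = ⟪u, x j⟫)
    (Dc : lp (fun _ : J => ℝ) 2 →L[ℝ] lp (fun _ : J => ℝ) 2)
    (hDc : ∀ (y : lp (fun _ : J => ℝ) 2) (j : J), Dc y j = c j * y j) :
    (∀ u : H, ∑' j, ⟪u, c j • x j⟫ ^ 2 = ‖u‖ ^ 2) ↔
      ∀ f : H, IsLeast (Set.range fun u : H => (1/2) * ‖Dc (Tstar u)‖ ^ 2 - ⟪f, u⟫)
        (-((1/2) * ‖f‖ ^ 2)) := by
  have hnorm (u : H) : ‖Dc (Tstar u)‖ ^ 2 = ∑' j, ⟪u, c j • x j⟫ ^ 2 := by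
    simp only [lp.norm_sq_eq_tsum_sq, hDc, hT, real_inner_smul_right]
  simp only [← hnorm]
  exact forall_eq_norm_sq_iff_isLeast _

/-- A frame `F` is scalable with scaling `c` iff for every `f ∈ H`,
`min_{u ∈ H} [(1/2)‖D_c T* u‖² − ⟨f, u⟩] = −(1/2)‖f‖²`. -/
theorem stmt_14 {H : Type*} [NormedAddCommGroup H] [InnerProductSpace ℝ H] [CompleteSpace H]
    {J : Type*} (x : J → H) (A B : ℝ) (hA : 0 < A) (hAB : A ≤ B)
    (hlow : ∀ u : H, A * ‖u‖ ^ 2 ≤ ∑' j, ⟪u, x j⟫ ^ 2)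
    (hhigh : ∀ u : H, ∑' j, ⟪u, x j⟫ ^ 2 ≤ B * ‖u‖ ^ 2)
    (c : J → ℝ) (hc : ∃ C, ∀ j, |c j| ≤ C)
    (Tstar : H →L[ℝ] lp (fun _ : J => ℝ) 2)
    (hT : ∀ (u : H) (j : J), Tstar u j = ⟪u, x j⟫)
    (Dc : lp (fun _ : J => ℝ) 2 →L[ℝ] lp (fun _ : J => ℝ) 2)
    (hDc : ∀ (y : lp (fun _ : J => ℝ) 2) (j : J), Dc y j = c j * y j)
    (hframe : ∃ A' B' : ℝ, 0 < A' ∧ A' ≤ B' ∧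
      (∀ u : H, A' * ‖u‖ ^ 2 ≤ ∑' j, ⟪u, c j • x j⟫ ^ 2) ∧
      (∀ u : H, ∑' j, ⟪u, c j • x j⟫ ^ 2 ≤ B' * ‖u‖ ^ 2)) :
    (∀ u : H, ∑' j, ⟪u, c j • x j⟫ ^ 2 = ‖u‖ ^ 2) ↔
      ∀ f : H, IsLeast (Set.range fun u : H => (1/2) * ‖Dc (Tstar u)‖ ^ 2 - ⟪f, u⟫)
        (-((1/2) * ‖f‖ ^ 2)) :=
  stmt_14_general x c Tstar hT Dc hDc
end
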